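/- arXiv:1103.5161 — 4 statements merged into one kernel-verified Lean document; each statement's English description precedes it below -/
import Mathlib

section
/- Let U:[0,∞)→[0,∞) be nondecreasing, locally absolutely continuous, with U(r) ≤ ω_d r^d for all r, and suppose c U(r)^{(d-1)/d} ≤ 2 U'(r) + M·U(r) for a.e. r > 0, where c, M > 0 and d ≥ 2. Then for every r ≤ ω_d^{-1/d}·(c/(2M)), one has c·U(r)^{(d-1)/d} − M·U(r) ≥ (c/2)·U(r)^{(d-1)/d}, and consequently U(r) ≥ (c/(4d))^d r^d for all r ≤ ω_d^{-1/d}·(c/(2M)), provided U(r) > 0 for all r > 0. -/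
/-!
Set `p = (d - 1) / d`. For `r ≤ ω^(-1/d) c / (2M)` the bound `U ≤ ω r^d` gives
`U^(1/d) ≤ c / (2M)`, so `M U = M U^(1/d) U^p ≤ (c/2) U^p`: the first claim. Inserted in the
differential inequality it leaves `U' ≥ (c/4) U^p`, i.e. `(U^(1/d))' ≥ c / (4d)`. Comparing `U`
with `(c / (4d) (t - a))^d`, which vanishes at `a > 0` where `U > 0`, on `[a, r]` by continuous
induction and letting `a → 0⁺` gives the second claim.
-/

open MeasureTheory Set Filter Topology

lemma self_eq_rpow_inv_mul_rpow {d : ℕ} (hd : d ≠ 0) {u : ℝ} (hu : 0 ≤ u) :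
    u = u ^ (d⁻¹ : ℝ) * u ^ ((d - 1 : ℝ) / d) := by
  have hd' : (d : ℝ) ≠ 0 := Nat.cast_ne_zero.2 hd
  have hsum : (d⁻¹ : ℝ) + (d - 1) / d = 1 := by field_simp; ring
  rw [← Real.rpow_add' hu (by rw [hsum]; exact one_ne_zero), hsum, Real.rpow_one]

lemma mul_le_half_mul_rpow {d : ℕ} (hd : d ≠ 0) {c M u : ℝ} (hc : 0 ≤ c) (hM : 0 < M)
    (hu : 0 ≤ u) (hub : u ≤ (c / (2 * M)) ^ d) :
    M * u ≤ c / 2 * u ^ ((d - 1 : ℝ) / d) := by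
  have hroot : u ^ (d⁻¹ : ℝ) ≤ c / (2 * M) :=
    calc u ^ (d⁻¹ : ℝ) ≤ ((c / (2 * M)) ^ d) ^ (d⁻¹ : ℝ) :=
          Real.rpow_le_rpow hu hub (by positivity)
      _ = c / (2 * M) := Real.pow_rpow_inv_natCast (by positivity) hd
  calc M * u = M * u ^ (d⁻¹ : ℝ) * u ^ ((d - 1 : ℝ) / d) := by
        rw [mul_assoc, ← self_eq_rpow_inv_mul_rpow hd hu]
    _ ≤ M * (c / (2 * M)) * u ^ ((d - 1 : ℝ) / d) := by gcongr
    _ = c / 2 * u ^ ((d - 1 : ℝ) / d) := by field_simp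

lemma mul_pow_le_of_le_rpow_neg_inv {d : ℕ} (hd : d ≠ 0) {ω r ρ : ℝ} (hω : 0 < ω)
    (hr : 0 ≤ r) (hrρ : r ≤ ω ^ (-(1 : ℝ) / d) * ρ) : ω * r ^ d ≤ ρ ^ d := by
  have hωd : (ω ^ (-(1 : ℝ) / d)) ^ d = ω⁻¹ := by
    rw [neg_div, Real.rpow_neg hω.le, inv_pow, one_div, Real.rpow_inv_natCast_pow hω.le hd]
  calc ω * r ^ d ≤ ω * (ω ^ (-(1 : ℝ) / d) * ρ) ^ d := by gcongr
    _ = ρ ^ d := by rw [mul_pow, hωd, ← mul_assoc, mul_inv_cancel₀ hω.ne', one_mul]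

lemma pow_rpow_sub_one_div {d : ℕ} (hd : d ≠ 0) {x : ℝ} (hx : 0 ≤ x) :
    (x ^ d) ^ ((d - 1 : ℝ) / d) = x ^ (d - 1) := by
  have hd' : (d : ℝ) ≠ 0 := Nat.cast_ne_zero.2 hd
  rw [← Real.rpow_natCast x d, ← Real.rpow_mul hx, mul_div_cancel₀ _ hd',
    ← Nat.cast_pred (Nat.pos_of_ne_zero hd), Real.rpow_natCast]

/-- Continuous induction: `T` below is the first point where `φ ≤ U` fails; monotonicity of `U`
and continuity of `φ` give `U T ≤ φ T`, while the increment bound gives `U T > φ T`. -/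
lemma forall_Icc_le_of_sub_le_sub {U φ : ℝ → ℝ} {a b : ℝ} (hU : MonotoneOn U (Icc a b))
    (hφ : ContinuousOn φ (Icc a b)) (ha : φ a < U a)
    (hstep : ∀ T ∈ Icc a b, (∀ t ∈ Ico a T, φ t ≤ U t) → φ T - φ a ≤ U T - U a) :
    ∀ t ∈ Icc a b, φ t ≤ U t := by
  by_contra! hbad
  set S := {t ∈ Icc a b | U t < φ t}
  have hSsub : S ⊆ Icc a b := fun t ht => ht.1
  have hSne : S.Nonempty := let ⟨t, ht, hlt⟩ := hbad; ⟨t, ht, hlt⟩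
  have hSbdd : BddBelow S := ⟨a, fun t ht => ht.1.1⟩
  have hT : sInf S ∈ Icc a b :=
    ⟨le_csInf hSne fun t ht => ht.1.1, (csInf_le hSbdd hSne.some_mem).trans hSne.some_mem.1.2⟩
  have hbefore : ∀ t ∈ Ico a (sInf S), φ t ≤ U t := fun t ht =>
    not_lt.1 fun hlt => (csInf_le hSbdd ⟨⟨ht.1, ht.2.le.trans hT.2⟩, hlt⟩).not_gt ht.2
  have hUT : U (sInf S) ≤ φ (sInf S) := by
    have : (𝓝[S] sInf S).NeBot := mem_closure_iff_nhdsWithin_neBot.1 (csInf_mem_closure hSne hSbdd)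
    refine ge_of_tendsto ((hφ _ hT).mono hSsub) (eventually_nhdsWithin_of_forall fun s hs => ?_)
    exact (hU hT hs.1 (csInf_le hSbdd hs)).trans hs.2.le
  linarith [hstep _ hT hbefore]

/-- The hypothesis on `U'` says `(U^(1/d))' ≥ k`. -/
lemma pow_le_of_mul_rpow_le_deriv {d : ℕ} (hd : d ≠ 0) {k a b : ℝ} (hk : 0 ≤ k) (hab : a ≤ b)
    {U U' : ℝ → ℝ} (hU : MonotoneOn U (Icc a b)) (hUa : 0 < U a)
    (hftc : ∀ T ∈ Icc a b, U T - U a = ∫ t in a..T, U' t)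
    (hint : IntervalIntegrable U' volume a b)
    (hU' : ∀ᵐ t, t ∈ Icc a b → d * k * U t ^ ((d - 1 : ℝ) / d) ≤ U' t) :
    (k * (b - a)) ^ d ≤ U b := by
  set φ : ℝ → ℝ := fun t => (k * (t - a)) ^ d
  have hφ' : ∀ t, HasDerivAt φ (d * k * (k * (t - a)) ^ (d - 1)) t := fun t =>
    ((((hasDerivAt_id' t).sub_const a).const_mul k).fun_pow d).congr_deriv (by ring)
  have hφ'cont : Continuous fun t => d * k * (k * (t - a)) ^ (d - 1) := by fun_prop
  refine forall_Icc_le_of_sub_le_sub (φ := φ) hU (by fun_prop) (by simpa [φ, hd] using hUa) ?_ b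
    ⟨hab, le_rfl⟩
  intro T hT hle
  rw [hftc T hT, ← intervalIntegral.integral_eq_sub_of_hasDerivAt (fun t _ => hφ' t)
    (hφ'cont.intervalIntegrable _ _)]
  refine intervalIntegral.integral_mono_ae_restrict hT.1 (hφ'cont.intervalIntegrable _ _)
    (hint.mono_set (uIcc_subset_uIcc_left (Icc_subset_uIcc hT))) ?_
  rw [← Measure.restrict_congr_set Ico_ae_eq_Icc]
  filter_upwards [ae_restrict_mem measurableSet_Ico, ae_restrict_of_ae hU'] with t ht htU'
  have hφt : 0 ≤ k * (t - a) := mul_nonneg hk (sub_nonneg.2 ht.1)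
  have hp : (0 : ℝ) ≤ (d - 1 : ℝ) / d :=
    div_nonneg (sub_nonneg.2 (Nat.one_le_cast.2 (Nat.pos_of_ne_zero hd))) d.cast_nonneg
  calc d * k * (k * (t - a)) ^ (d - 1) = d * k * φ t ^ ((d - 1 : ℝ) / d) := by
        rw [pow_rpow_sub_one_div hd hφt]
    _ ≤ d * k * U t ^ ((d - 1 : ℝ) / d) := by
        gcongr
        exact hle t ht
    _ ≤ U' t := htU' ⟨ht.1, ht.2.le.trans hT.2⟩

lemma pow_mul_le_of_forall_Ioo {d : ℕ} {k r u : ℝ} (hr : 0 < r)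
    (h : ∀ a ∈ Ioo 0 r, (k * (r - a)) ^ d ≤ u) : (k * r) ^ d ≤ u := by
  have hlim : Tendsto (fun a => (k * (r - a)) ^ d) (𝓝[>] 0) (𝓝 ((k * r) ^ d)) := by
    have hcont : Continuous fun a : ℝ => (k * (r - a)) ^ d := by fun_prop
    simpa using (hcont.tendsto 0).mono_left nhdsWithin_le_nhds
  exact le_of_tendsto hlim (mem_of_superset (Ioo_mem_nhdsGT hr) h)

/-- Gronwall-type ODE step in the density estimates for minimizers of the
prescribed curvature functional. -/
theorem stmt_0 (d : ℕ) (hd : 2 ≤ d) (ω c M : ℝ) (hω : 0 < ω) (hc : 0 < c) (hM : 0 < M)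
    (U U' : ℝ → ℝ)
    (hmono : MonotoneOn U (Set.Ici 0))
    (hnonneg : ∀ r, 0 ≤ r → 0 ≤ U r)
    (hbound : ∀ r, 0 ≤ r → U r ≤ ω * r ^ d)
    (hftc : ∀ a b : ℝ, 0 ≤ a → a ≤ b → U b - U a = ∫ t in a..b, U' t)
    (hode : ∀ᵐ r : ℝ ∂volume, 0 < r → c * U r ^ ((d - 1 : ℝ) / d) ≤ 2 * U' r + M * U r) :
    (∀ r : ℝ, 0 < r → r ≤ ω ^ (-(1 : ℝ) / d) * (c / (2 * M)) →
      c / 2 * U r ^ ((d - 1 : ℝ) / d) ≤ c * U r ^ ((d - 1 : ℝ) / d) - M * U r) ∧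
    ((∀ r : ℝ, 0 < r → 0 < U r) →
      ∀ r : ℝ, 0 < r → r ≤ ω ^ (-(1 : ℝ) / d) * (c / (2 * M)) →
        (c / (4 * d)) ^ d * r ^ d ≤ U r) := by
  have hd0 : d ≠ 0 := by omega
  have hsmall : ∀ r, 0 < r → r ≤ ω ^ (-(1 : ℝ) / d) * (c / (2 * M)) →
      M * U r ≤ c / 2 * U r ^ ((d - 1 : ℝ) / d) := fun r hr hrR =>
    mul_le_half_mul_rpow hd0 hc.le hM (hnonneg r hr.le)
      ((hbound r hr.le).trans (mul_pow_le_of_le_rpow_neg_inv hd0 hω hr.le hrR))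
  refine ⟨fun r hr hrR => by linarith [hsmall r hr hrR], fun hpos r hr hrR => ?_⟩
  have hU0 : U 0 = 0 := le_antisymm (by simpa [hd0] using hbound 0 le_rfl) (hnonneg 0 le_rfl)
  have hint : IntervalIntegrable U' volume 0 r :=
    intervalIntegral.intervalIntegrable_of_integral_ne_zero <| by
      rw [← hftc 0 r le_rfl hr.le, hU0, sub_zero]; exact (hpos r hr).ne'
  have hdk : (d : ℝ) * (c / (4 * d)) = c / 4 := by field_simp
  rw [← mul_pow]
  refine pow_mul_le_of_forall_Ioo hr fun a ha => pow_le_of_mul_rpow_le_deriv hd0 (by positivity)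
    ha.2.le (hmono.mono fun t ht => ha.1.le.trans ht.1) (hpos a ha.1)
    (fun T hT => hftc a T ha.1.le hT.1)
    (hint.mono_set (uIcc_subset_uIcc_right (Icc_subset_uIcc ⟨ha.1.le, ha.2.le⟩))) ?_
  filter_upwards [hode] with t hode_t ht
  have ht0 : 0 < t := ha.1.trans_le ht.1
  rw [hdk]
  linarith [hode_t ht0, hsmall t ht0 (ht.2.trans hrR)]
end

section
/- The Alexandrov–Fenchel-type inequality ((d−1)/d)·P(E)^2 ≥ |E|·∫_{∂E} κ dH^{d−1} fails for general smooth compact sets in ℝ^2: for a disjoint union of N balls in ℝ^2 with radii r_i = 1/i², as N → ∞ the left-hand side remains bounded while the right-hand side tends to +∞. -/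
open Filter Finset Real Topology

/- The perimeters `2π Σ rᵢ` are partial sums of `2π ζ(2)`, hence bounded, while the areas
`π Σ rᵢ²` increase to `π ζ(4) > 0`; multiplied by the total curvature `2πN` they diverge. -/

lemma hasSum_one_div_nat_succ_pow {k : ℕ} {a : ℝ} (hk : k ≠ 0)
    (h : HasSum (fun n : ℕ => 1 / (n : ℝ) ^ k) a) :
    HasSum (fun n : ℕ => 1 / ((n : ℝ) + 1) ^ k) a := by
  simpa [hk] using (hasSum_nat_add_iff' 1).mpr h

lemma sum_range_one_div_succ_sq_le (N : ℕ) :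
    ∑ i ∈ range N, (1 : ℝ) / ((i : ℝ) + 1) ^ 2 ≤ π ^ 2 / 6 :=
  sum_le_hasSum _ (fun _ _ => by positivity)
    (hasSum_one_div_nat_succ_pow two_ne_zero hasSum_zeta_two)

lemma tendsto_sum_range_one_div_succ_pow_four :
    Tendsto (fun N : ℕ => ∑ i ∈ range N, (1 : ℝ) / ((i : ℝ) + 1) ^ 4) atTop (𝓝 (π ^ 4 / 90)) :=
  (hasSum_one_div_nat_succ_pow four_ne_zero hasSum_zeta_four).tendsto_sum_nat

/-- The Alexandrov–Fenchel inequality `((d-1)/d) P(E)² ≥ |E| ∫_{∂E} κ` fails for the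
disjoint union of `N` balls in `ℝ²` of radii `rᵢ = 1/i²`: the left-hand side
`(1/2)(2π Σ rᵢ)²` stays bounded while the right-hand side `(π Σ rᵢ²)·2πN` blows up,
so the inequality fails for some `N`. -/
theorem stmt_5 :
    (∃ B : ℝ, ∀ N : ℕ,
      (1 / 2 : ℝ) * (2 * Real.pi * ∑ i ∈ Finset.range N, (1 : ℝ) / ((i : ℝ) + 1) ^ 2) ^ 2 ≤ B) ∧
    Tendsto
      (fun N : ℕ =>
        (Real.pi * ∑ i ∈ Finset.range N, (1 : ℝ) / ((i : ℝ) + 1) ^ 4) * (2 * Real.pi * N))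
      atTop atTop ∧
    ∃ N : ℕ,
      (1 / 2 : ℝ) * (2 * Real.pi * ∑ i ∈ Finset.range N, (1 : ℝ) / ((i : ℝ) + 1) ^ 2) ^ 2 <
        (Real.pi * ∑ i ∈ Finset.range N, (1 : ℝ) / ((i : ℝ) + 1) ^ 4) * (2 * Real.pi * N) := by
  have bounded : ∀ N : ℕ,
      (1 / 2 : ℝ) * (2 * π * ∑ i ∈ range N, (1 : ℝ) / ((i : ℝ) + 1) ^ 2) ^ 2 ≤
        1 / 2 * (2 * π * (π ^ 2 / 6)) ^ 2 := fun N => by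
    gcongr; exact sum_range_one_div_succ_sq_le N
  have diverges := (tendsto_sum_range_one_div_succ_pow_four.const_mul π).pos_mul_atTop
    (by positivity) (tendsto_natCast_atTop_atTop.const_mul_atTop (by positivity : 0 < 2 * π))
  obtain ⟨N, hN⟩ := (diverges.eventually_gt_atTop (1 / 2 * (2 * π * (π ^ 2 / 6)) ^ 2)).exists
  exact ⟨⟨_, bounded⟩, diverges, N, (bounded N).trans_lt hN⟩
end

section
/- Let f:(0,∞)→ℝ be defined by f(v) = min{ P(E) − ∫_E g dx : |E| = v } (assuming the minimum is attained for every v). Then f is sub-additive: f(v + v') ≤ f(v) + f(v') for all v, v' > 0. -/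
/-! Take minimizers `E`, `E'` for the volumes `v`, `v'`; both are bounded, so translating `E'` by a
long enough integer vector separates its closure from that of `E` without changing `F` or the
volume. The disjoint union is then a competitor of volume `v + v'` with energy `f v + f v'`. -/

open MeasureTheory Set Bornology Filter

theorem eventually_disjoint_closure_image_add_right {E : Type*} [SeminormedAddCommGroup E]
    {A B : Set E} (hA : IsBounded A) (hB : IsBounded B) :
    ∀ᶠ c in cobounded E, Disjoint (closure A) (closure ((· + c) '' B)) := by
  filter_upwards [isBounded_def.mp (hA.closure.sub hB.closure)] with c hc
  rw [← show (· + c) '' closure B = closure ((· + c) '' B) from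
    (Homeomorph.addRight c).image_closure B, disjoint_left]
  rintro _ hx ⟨y, hy, rfl⟩
  exact hc ⟨_, hx, y, hy, add_sub_cancel_left y c⟩

theorem tendsto_withLp_const_natCast_cobounded {p : ENNReal} [Fact (1 ≤ p)] {ι : Type*}
    [Fintype ι] [Nonempty ι] :
    Tendsto (fun n : ℕ => (WithLp.equiv p (ι → ℝ)).symm (fun _ => ((n : ℤ) : ℝ))) atTop
      (cobounded (PiLp p fun _ : ι => ℝ)) := by
  rw [← tendsto_norm_atTop_iff_cobounded]
  refine tendsto_atTop_mono (fun n => ?_) tendsto_natCast_atTop_atTop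
  obtain ⟨i⟩ := ‹Nonempty ι›
  simpa using PiLp.norm_apply_le ((WithLp.equiv p (ι → ℝ)).symm (fun _ => ((n : ℤ) : ℝ))) i

theorem measure_union_image_add_right {G : Type*} [MeasurableSpace G] [AddGroup G]
    [MeasurableAdd G] (μ : Measure G) [μ.IsAddRightInvariant] {A B : Set G} {c : G}
    (hB : MeasurableSet B) (hAB : Disjoint A ((· + c) '' B)) :
    μ (A ∪ (· + c) '' B) = μ A + μ B := by
  rw [image_add_right] at hAB ⊢
  rw [measure_union hAB (hB.preimage (measurable_add_const _)), measure_preimage_add_right]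

/-- Sub-additivity of the isovolumetric function `f(v) = min_{|E|=v} F(E)`,
where `F` is invariant by integer translations (periodicity of `g`) and is additive on
sets lying at positive distance from each other. -/
theorem stmt_6 (d : ℕ) (hd : 1 ≤ d)
    (F : Set (EuclideanSpace ℝ (Fin d)) → ℝ) (f : ℝ → ℝ)
    (hmin : ∀ v : ℝ, 0 < v → ∃ E : Set (EuclideanSpace ℝ (Fin d)),
      MeasurableSet E ∧ Bornology.IsBounded E ∧ (volume E).toReal = v ∧ F E = f v)
    (hlb : ∀ v : ℝ, 0 < v → ∀ E : Set (EuclideanSpace ℝ (Fin d)),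
      MeasurableSet E → (volume E).toReal = v → f v ≤ F E)
    (htrans : ∀ (E : Set (EuclideanSpace ℝ (Fin d))) (z : Fin d → ℤ),
      F ((fun x => x + (WithLp.equiv 2 (Fin d → ℝ)).symm (fun i => (z i : ℝ))) '' E) = F E)
    (hadd : ∀ E E' : Set (EuclideanSpace ℝ (Fin d)),
      Disjoint (closure E) (closure E') → F (E ∪ E') = F E + F E') :
    ∀ v v' : ℝ, 0 < v → 0 < v' → f (v + v') ≤ f v + f v' := by
  intro v v' hv hv'
  obtain ⟨E, hEm, hEb, hEv, hEF⟩ := hmin v hv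
  obtain ⟨E', hE'm, hE'b, hE'v, hE'F⟩ := hmin v' hv'
  have : Nonempty (Fin d) := ⟨⟨0, hd⟩⟩
  obtain ⟨N, hN⟩ := (tendsto_withLp_const_natCast_cobounded.eventually
    (eventually_disjoint_closure_image_add_right hEb hE'b)).exists
  set E'' := (· + (WithLp.equiv 2 (Fin d → ℝ)).symm fun _ => ((N : ℤ) : ℝ)) '' E'
  have hvol : (volume (E ∪ E'')).toReal = v + v' := by
    rw [measure_union_image_add_right volume hE'm (hN.mono subset_closure subset_closure),
      ENNReal.toReal_add hEb.measure_lt_top.ne hE'b.measure_lt_top.ne, hEv, hE'v]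
  calc f (v + v') ≤ F (E ∪ E'') := hlb _ (by positivity) _ (hEm.union (by measurability)) hvol
    _ = F E + F E'' := hadd _ _ hN
    _ = f v + f v' := by rw [htrans E' fun _ => N, hEF, hE'F]
end

section
/- Suppose E_n, E ⊂ ℝ^d are sets with |E_n Δ E| → 0, and suppose there exist γ > 0 and r₀ > 0 such that for every n and every x: if x ∈ E_n then |E_n ∩ B_r(x)| ≥ γ r^d for all r ≤ r₀, and if x ∉ E_n then |B_r(x) \ E_n| ≥ γ r^d for all r ≤ r₀; assume E satisfies the same density estimates. Then ∂E_n → ∂E in the Hausdorff distance: for every ε ∈ (0, r₀], for all n sufficiently large, ∂E_n ⊂ {y : dist(y, ∂E) ≤ ε} and ∂E ⊂ {y : dist(y, ∂E_n) ≤ ε}. -/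
/-!
If `y` lies on `∂A` but the ball `B(y, ε)` misses `∂B`, this ball lies entirely inside `B` or
entirely outside it, being connected. Since `y` is a boundary point of `A`, there are points of
`A` and of `Aᶜ` within `ε / 2` of `y`, and the density estimates for `A` at one of them put a
mass `γ (ε / 2)ᵈ` of `A Δ B` inside `B(y, ε)`. Once `|Eₙ Δ E|` falls below that mass, every
boundary point of either set is therefore within `ε` of the boundary of the other.
-/

open MeasureTheory Metric Set Filter
open scoped ENNReal

theorem IsPreconnected.subset_or_subset_compl_of_disjoint_frontier {X : Type*}
    [TopologicalSpace X] {S G : Set X} (hS : IsPreconnected S) (h : Disjoint S (frontier G)) :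
    S ⊆ G ∨ S ⊆ Gᶜ := by
  have hcover : S ⊆ interior G ∪ interior Gᶜ :=
    compl_frontier_eq_union_interior (s := G) ▸ h.subset_compl_right
  have hdisj : Disjoint (interior G) (interior Gᶜ) :=
    disjoint_compl_right.mono interior_subset interior_subset
  exact (hS.subset_or_subset isOpen_interior isOpen_interior hdisj hcover).imp
    (·.trans interior_subset) (·.trans interior_subset)

section DensityEstimates

variable {X : Type*} [PseudoMetricSpace X] [MeasurableSpace X]

def HasDensityEstimates (μ : Measure X) (r : ℝ) (c : ℝ≥0∞) (A : Set X) : Prop :=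
  (∀ x ∈ A, c ≤ μ (A ∩ ball x r)) ∧ ∀ x ∉ A, c ≤ μ (ball x r \ A)

variable {μ : Measure X} {r : ℝ} {c : ℝ≥0∞} {A B : Set X} {y : X}

theorem HasDensityEstimates.le_measure_symmDiff (hA : HasDensityEstimates μ r c A)
    (hr : 0 < r) (hy : y ∈ frontier A) (hB : ball y (2 * r) ⊆ B ∨ ball y (2 * r) ⊆ Bᶜ) :
    c ≤ μ (symmDiff A B) := by
  have ball_subset {x : X} (hxy : dist y x < r) : ball x r ⊆ ball y (2 * r) :=
    ball_subset_ball' (by rw [dist_comm]; linarith)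
  rw [frontier_eq_closure_inter_closure] at hy
  rcases hB with hB | hB
  · obtain ⟨x, hxA, hxy⟩ := mem_closure_iff.1 hy.2 r hr
    refine (hA.2 x hxA).trans (measure_mono fun z hz => ?_)
    exact Or.inr ⟨hB (ball_subset hxy hz.1), hz.2⟩
  · obtain ⟨x, hxA, hxy⟩ := mem_closure_iff.1 hy.1 r hr
    refine (hA.1 x hxA).trans (measure_mono fun z hz => ?_)
    exact Or.inl ⟨hz.1, hB (ball_subset hxy hz.2)⟩

end DensityEstimates

theorem HasDensityEstimates.infDist_frontier_le {E : Type*} [NormedAddCommGroup E]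
    [NormedSpace ℝ E] [MeasurableSpace E] {μ : Measure E} {r : ℝ} {c : ℝ≥0∞} {A B : Set E}
    {y : E} (hA : HasDensityEstimates μ r c A) (hr : 0 < r) (hy : y ∈ frontier A)
    (hAB : μ (symmDiff A B) < c) :
    infDist y (frontier B) ≤ 2 * r := by
  by_contra! h
  have hdisj : Disjoint (ball y (2 * r)) (frontier B) :=
    disjoint_ball_infDist.mono_left (ball_subset_ball h.le)
  have hB := (convex_ball y (2 * r)).isPreconnected.subset_or_subset_compl_of_disjoint_frontier
    hdisj
  exact (hAB.trans_le (hA.le_measure_symmDiff hr hy hB)).false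

theorem stmt_19_general (d : ℕ) (γ r₀ : ℝ) (hγ : 0 < γ)
    (E : ℕ → Set (EuclideanSpace ℝ (Fin d))) (F : Set (EuclideanSpace ℝ (Fin d)))
    (hconv : Tendsto (fun n => volume (symmDiff (E n) F)) atTop (nhds 0))
    (hin : ∀ n, ∀ x ∈ E n, ∀ r : ℝ, 0 < r → r ≤ r₀ →
      ENNReal.ofReal (γ * r ^ d) ≤ volume (E n ∩ ball x r))
    (hout : ∀ n, ∀ x, x ∉ E n → ∀ r : ℝ, 0 < r → r ≤ r₀ →
      ENNReal.ofReal (γ * r ^ d) ≤ volume (ball x r \ E n))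
    (hFin : ∀ x ∈ F, ∀ r : ℝ, 0 < r → r ≤ r₀ →
      ENNReal.ofReal (γ * r ^ d) ≤ volume (F ∩ ball x r))
    (hFout : ∀ x, x ∉ F → ∀ r : ℝ, 0 < r → r ≤ r₀ →
      ENNReal.ofReal (γ * r ^ d) ≤ volume (ball x r \ F)) :
    ∀ ε : ℝ, 0 < ε → ε ≤ r₀ →
      ∀ᶠ n in atTop,
        (∀ y ∈ frontier (E n), Metric.infDist y (frontier F) ≤ ε) ∧
        (∀ y ∈ frontier F, Metric.infDist y (frontier (E n)) ≤ ε) := by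
  intro ε hε hεr₀
  have hr : 0 < ε / 2 := half_pos hε
  have hrr₀ : ε / 2 ≤ r₀ := by linarith
  set c := ENNReal.ofReal (γ * (ε / 2) ^ d)
  have hc : 0 < c := ENNReal.ofReal_pos.2 (by positivity)
  have hE (n : ℕ) : HasDensityEstimates volume (ε / 2) c (E n) :=
    ⟨fun x hx => hin n x hx _ hr hrr₀, fun x hx => hout n x hx _ hr hrr₀⟩
  have hF : HasDensityEstimates volume (ε / 2) c F :=
    ⟨fun x hx => hFin x hx _ hr hrr₀, fun x hx => hFout x hx _ hr hrr₀⟩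
  filter_upwards [hconv.eventually_lt_const hc] with n hn
  refine ⟨fun y hy => ?_, fun y hy => ?_⟩
  · exact ((hE n).infDist_frontier_le hr hy hn).trans_eq (by ring)
  · exact (hF.infDist_frontier_le hr hy (by rwa [symmDiff_comm])).trans_eq (by ring)

/-- `L¹` convergence together with uniform interior and exterior density estimates
implies Hausdorff convergence of the boundaries. -/
theorem stmt_19 (d : ℕ) (hd : 1 ≤ d) (γ r₀ : ℝ) (hγ : 0 < γ) (hr₀ : 0 < r₀)
    (E : ℕ → Set (EuclideanSpace ℝ (Fin d))) (F : Set (EuclideanSpace ℝ (Fin d)))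
    (hEm : ∀ n, MeasurableSet (E n)) (hFm : MeasurableSet F)
    (hconv : Tendsto (fun n => volume (symmDiff (E n) F)) atTop (nhds 0))
    (hin : ∀ n, ∀ x ∈ E n, ∀ r : ℝ, 0 < r → r ≤ r₀ →
      ENNReal.ofReal (γ * r ^ d) ≤ volume (E n ∩ ball x r))
    (hout : ∀ n, ∀ x, x ∉ E n → ∀ r : ℝ, 0 < r → r ≤ r₀ →
      ENNReal.ofReal (γ * r ^ d) ≤ volume (ball x r \ E n))
    (hFin : ∀ x ∈ F, ∀ r : ℝ, 0 < r → r ≤ r₀ →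
      ENNReal.ofReal (γ * r ^ d) ≤ volume (F ∩ ball x r))
    (hFout : ∀ x, x ∉ F → ∀ r : ℝ, 0 < r → r ≤ r₀ →
      ENNReal.ofReal (γ * r ^ d) ≤ volume (ball x r \ F)) :
    ∀ ε : ℝ, 0 < ε → ε ≤ r₀ →
      ∀ᶠ n in atTop,
        (∀ y ∈ frontier (E n), Metric.infDist y (frontier F) ≤ ε) ∧
        (∀ y ∈ frontier F, Metric.infDist y (frontier (E n)) ≤ ε) :=
  stmt_19_general d γ r₀ hγ E F hconv hin hout hFin hFout
end
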